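/- Let q be a complex number with 0 < |q| < 1, and let c be a complex number with c·q^k ≠ 1 for every integer k ≥ 0. Then ∑_{n=1}^{∞} ((−1)^{n−1}·q^{n(n−1)/2}/(q;q)_n) · (∑_{k=0}^{n−1} 1/(1 − c·q^k)) = (q;q)_∞/(c;q)_∞. -/

import Mathlib

/-- The finite q-Pochhammer symbol `(a;q)_n = ∏_{k=0}^{n-1} (1 - a q^k)`. -/
noncomputable def qPoch (a q : ℂ) (n : ℕ) : ℂ := ∏ k ∈ Finset.range n, (1 - a * q ^ k)

/-- The infinite q-Pochhammer symbol `(a;q)_∞ = ∏_{k=0}^{∞} (1 - a q^k)`. -/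
noncomputable def qPochInf (a q : ℂ) : ℂ := ∏' k : ℕ, (1 - a * q ^ k)

/-!
Write `E k = (-1)^k q^(k(k+1)/2) / (q;q)_k`. Since
`E n - E (n+1) = (-1)^n q^(n(n+1)/2) / (q;q)_(n+1)`, Abel summation turns the series into
`F c = ∑ₖ E k / (1 - c q^k)`, the partial-fraction expansion of `(q;q)_∞ / (c;q)_∞` over its poles
`c = q^(-k)`. From `E (k+1) (1 - q^(k+1)) = -q^(k+1) E k` one gets `(1 - c) F c = F (c q)`, hence
`(c;q)_m F c = F (c q^m) → F 0 = ∑ₖ E k` by dominated convergence. The last sum is `(q;q)_∞` by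
Euler's identity, proved the same way from `G x = (1 - q x) G (q x)` for `G x = ∑ₖ E k xᵏ`, whose
value `G (q^m)` tends to `G 0 = 1`.
-/

open Filter Topology Finset

lemma qPoch_succ (a q : ℂ) (n : ℕ) : qPoch a q (n + 1) = qPoch a q n * (1 - a * q ^ n) :=
  prod_range_succ _ n

section QPochhammer

variable {q : ℂ}

lemma qPoch_ne_zero {a : ℂ} (ha : ∀ k : ℕ, a * q ^ k ≠ 1) (n : ℕ) : qPoch a q n ≠ 0 :=
  prod_ne_zero_iff.mpr fun k _ => sub_ne_zero.mpr (ha k).symm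

lemma mul_pow_ne_one_of_norm_lt_one (hq : ‖q‖ < 1) (k : ℕ) : q * q ^ k ≠ 1 := by
  rw [← pow_succ']
  exact fun h =>
    (pow_lt_one₀ (norm_nonneg q) hq k.succ_ne_zero).ne (by simpa using congrArg norm h)

lemma summable_norm_neg_mul_pow (a : ℂ) (hq : ‖q‖ < 1) :
    Summable fun k : ℕ => ‖-(a * q ^ k)‖ := by
  simpa [norm_mul, norm_pow] using (summable_geometric_of_lt_one (norm_nonneg q) hq).mul_left ‖a‖

lemma tendsto_qPoch (a : ℂ) (hq : ‖q‖ < 1) : Tendsto (qPoch a q) atTop (𝓝 (qPochInf a q)) := by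
  have := (multipliable_one_add_of_summable (summable_norm_neg_mul_pow a hq)).hasProd
  simp only [← sub_eq_add_neg] at this
  exact this.tendsto_prod_nat

lemma qPochInf_ne_zero {a : ℂ} (hq : ‖q‖ < 1) (ha : ∀ k : ℕ, a * q ^ k ≠ 1) : qPochInf a q ≠ 0 := by
  have := tprod_one_add_ne_zero_of_summable
    (fun k => by simpa [← sub_eq_add_neg] using sub_ne_zero.mpr (ha k).symm)
    (summable_norm_neg_mul_pow a hq)
  simpa [qPochInf, ← sub_eq_add_neg] using this

lemma exists_norm_inv_one_sub_mul_pow_le (a : ℂ) (hq : ‖q‖ < 1) :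
    ∃ M, ∀ k : ℕ, ‖(1 - a * q ^ k)⁻¹‖ ≤ M := by
  have hlim : Tendsto (fun k : ℕ => (1 - a * q ^ k)⁻¹) atTop (𝓝 (1 - a * 0)⁻¹) :=
    ((tendsto_const_nhds.sub
      ((tendsto_pow_atTop_nhds_zero_of_norm_lt_one hq).const_mul a)).inv₀ (by simp))
  obtain ⟨M, hM⟩ := hlim.norm.bddAbove_range
  exact ⟨M, fun k => hM ⟨k, rfl⟩⟩

end QPochhammer

lemma sum_range_sub_succ_mul_sum_range {R : Type*} [CommRing R] (e w : ℕ → R) (N : ℕ) :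
    ∑ n ∈ range N, (e n - e (n + 1)) * ∑ k ∈ range (n + 1), w k =
      ∑ n ∈ range N, e n * w n - e N * ∑ k ∈ range N, w k := by
  induction N with
  | zero => simp
  | succ N ih =>
    rw [sum_range_succ, ih, sum_range_succ, sum_range_succ (fun n => e n * w n)]
    ring

lemma tsum_sub_succ_mul_sum_range {R : Type*} [NormedCommRing R] [CompleteSpace R] {e w : ℕ → R}
    {r B M : ℝ} (hr0 : 0 ≤ r) (hr1 : r < 1) (he : ∀ n, ‖e n‖ ≤ B * r ^ n) (hw : ∀ k, ‖w k‖ ≤ M) :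
    ∑' n, (e n - e (n + 1)) * ∑ k ∈ range (n + 1), w k = ∑' n, e n * w n := by
  have hB : 0 ≤ B := by simpa using (norm_nonneg _).trans (he 0)
  have hM : 0 ≤ M := (norm_nonneg _).trans (hw 0)
  have hW (N : ℕ) : ‖∑ k ∈ range N, w k‖ ≤ N * M := by
    simpa using norm_sum_le_of_le (range N) fun k _ => hw k
  have hgeo : Summable fun n : ℕ => r ^ n := summable_geometric_of_lt_one hr0 hr1
  have hgeo' : Summable fun n : ℕ => (n : ℝ) * r ^ n := by
    simpa using summable_pow_mul_geometric_of_norm_lt_one 1 (by rwa [Real.norm_of_nonneg hr0])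
  have hsum : Summable fun n => (e n - e (n + 1)) * ∑ k ∈ range (n + 1), w k := by
    refine .of_norm_bounded ((hgeo'.add hgeo).mul_left (2 * B * M)) fun n => ?_
    have hr : r ^ (n + 1) ≤ r ^ n := pow_le_pow_of_le_one hr0 hr1.le n.le_succ
    calc ‖(e n - e (n + 1)) * ∑ k ∈ range (n + 1), w k‖
        ≤ (B * r ^ n + B * r ^ (n + 1)) * ((n + 1 : ℕ) * M) := by
          refine (norm_mul_le _ _).trans ?_
          gcongr
          · exact (norm_sub_le _ _).trans (add_le_add (he n) (he (n + 1)))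
          · exact hW (n + 1)
      _ ≤ (B * r ^ n + B * r ^ n) * ((n + 1 : ℕ) * M) := by gcongr
      _ = 2 * B * M * (n * r ^ n + r ^ n) := by push_cast; ring
  have hsum' : Summable fun n => e n * w n :=
    .of_norm_bounded (hgeo.mul_left (B * M)) fun n => by
      refine (norm_mul_le _ _).trans ?_
      rw [mul_right_comm]
      exact mul_le_mul (he n) (hw n) (norm_nonneg _) ((norm_nonneg _).trans (he n))
  have hbdry : Tendsto (fun N => e N * ∑ k ∈ range N, w k) atTop (𝓝 0) := by
    refine squeeze_zero_norm (fun N => ?_) ((hgeo'.mul_left (B * M)).tendsto_atTop_zero)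
    exact (norm_mul_le _ _).trans <|
      (mul_le_mul (he N) (hW N) (norm_nonneg _) ((norm_nonneg _).trans (he N))).trans_eq (by ring)
  refine tendsto_nhds_unique hsum.hasSum.tendsto_sum_nat ?_
  simp_rw [sum_range_sub_succ_mul_sum_range]
  simpa using hsum'.hasSum.tendsto_sum_nat.sub hbdry

section Euler

variable {q : ℂ}

noncomputable def eulerCoeff (q : ℂ) (k : ℕ) : ℂ := (-1) ^ k * q ^ (k * (k + 1) / 2) / qPoch q q k

lemma eulerCoeff_zero (q : ℂ) : eulerCoeff q 0 = 1 := by simp [eulerCoeff, qPoch]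

lemma succ_mul_succ_add_one_div_two (k : ℕ) :
    (k + 1) * (k + 1 + 1) / 2 = k * (k + 1) / 2 + (k + 1) := by
  rw [show (k + 1) * (k + 1 + 1) = k * (k + 1) + 2 * (k + 1) by ring,
    Nat.add_mul_div_left _ _ two_pos]

lemma eulerCoeff_succ_mul (hq : ‖q‖ < 1) (k : ℕ) :
    eulerCoeff q (k + 1) * (1 - q ^ (k + 1)) = -q ^ (k + 1) * eulerCoeff q k := by
  have hne : 1 - q ^ (k + 1) ≠ 0 :=
    pow_succ' q k ▸ sub_ne_zero.mpr (mul_pow_ne_one_of_norm_lt_one hq k).symm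
  simp only [eulerCoeff, qPoch_succ, succ_mul_succ_add_one_div_two, ← pow_succ']
  field_simp [hne, qPoch_ne_zero (mul_pow_ne_one_of_norm_lt_one hq)]
  ring

lemma eulerCoeff_sub_eulerCoeff_succ (hq : ‖q‖ < 1) (n : ℕ) :
    eulerCoeff q n - eulerCoeff q (n + 1) =
      (-1) ^ n * q ^ ((n + 1) * n / 2) / qPoch q q (n + 1) := by
  have hne := sub_ne_zero.mpr (mul_pow_ne_one_of_norm_lt_one hq n).symm
  simp only [eulerCoeff, qPoch_succ, succ_mul_succ_add_one_div_two, mul_comm (n + 1) n]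
  field_simp [hne, qPoch_ne_zero (mul_pow_ne_one_of_norm_lt_one hq)]
  ring

lemma exists_norm_eulerCoeff_le (hq : ‖q‖ < 1) : ∃ B, ∀ k, ‖eulerCoeff q k‖ ≤ B * ‖q‖ ^ k := by
  have hlim :=
    (tendsto_qPoch q hq).inv₀ (qPochInf_ne_zero hq (mul_pow_ne_one_of_norm_lt_one hq))
  obtain ⟨B, hB⟩ := hlim.norm.bddAbove_range
  refine ⟨B, fun k => ?_⟩
  have hk : k ≤ k * (k + 1) / 2 := by
    rcases k with _ | k
    · simp
    · exact (Nat.le_div_iff_mul_le two_pos).mpr (Nat.mul_le_mul_left _ (by omega))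
  calc ‖eulerCoeff q k‖ = ‖q‖ ^ (k * (k + 1) / 2) * ‖(qPoch q q k)⁻¹‖ := by
        simp [eulerCoeff, div_eq_mul_inv]
    _ ≤ ‖q‖ ^ k * B :=
        mul_le_mul (pow_le_pow_of_le_one (norm_nonneg q) hq.le hk) (hB ⟨k, rfl⟩) (norm_nonneg _)
          (by positivity)
    _ = B * ‖q‖ ^ k := mul_comm _ _

lemma summable_eulerCoeff_mul (hq : ‖q‖ < 1) {y : ℕ → ℂ} {M : ℝ} (hy : ∀ k, ‖y k‖ ≤ M) :
    Summable fun k => eulerCoeff q k * y k := by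
  obtain ⟨B, hB⟩ := exists_norm_eulerCoeff_le hq
  refine .of_norm_bounded ((summable_geometric_of_lt_one (norm_nonneg q) hq).mul_left (B * M))
    fun k => ?_
  rw [norm_mul, mul_right_comm]
  exact mul_le_mul (hB k) (hy k) (norm_nonneg _) ((norm_nonneg _).trans (hB k))

lemma summable_eulerCoeff (hq : ‖q‖ < 1) : Summable (eulerCoeff q) := by
  simpa using summable_eulerCoeff_mul hq (y := 1) (M := 1) (by simp)

lemma tendsto_tsum_eulerCoeff_mul (hq : ‖q‖ < 1) {y : ℕ → ℕ → ℂ} {z : ℕ → ℂ} {M : ℝ}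
    (hy : ∀ m k, ‖y m k‖ ≤ M) (hlim : ∀ k, Tendsto (y · k) atTop (𝓝 (z k))) :
    Tendsto (fun m => ∑' k, eulerCoeff q k * y m k) atTop (𝓝 (∑' k, eulerCoeff q k * z k)) := by
  obtain ⟨B, hB⟩ := exists_norm_eulerCoeff_le hq
  refine tendsto_tsum_of_dominated_convergence
    ((summable_geometric_of_lt_one (norm_nonneg q) hq).mul_left (B * M))
    (fun k => (hlim k).const_mul _) (.of_forall fun m k => ?_)
  rw [norm_mul, mul_right_comm]
  exact mul_le_mul (hB k) (hy m k) (norm_nonneg _) ((norm_nonneg _).trans (hB k))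

noncomputable def eulerSeries (q x : ℂ) : ℂ := ∑' k, eulerCoeff q k * x ^ k

lemma eulerSeries_zero (q : ℂ) : eulerSeries q 0 = 1 := by
  rw [eulerSeries, tsum_eq_single 0 fun k hk => by simp [hk], pow_zero, mul_one, eulerCoeff_zero]

lemma eulerSeries_eq_one_sub_mul (hq : ‖q‖ < 1) {x : ℂ} (hx : ‖x‖ ≤ 1) :
    eulerSeries q x = (1 - q * x) * eulerSeries q (q * x) := by
  have hsum {y : ℂ} (hy : ‖y‖ ≤ 1) : Summable fun k => eulerCoeff q k * y ^ k :=
    summable_eulerCoeff_mul hq fun k => by simpa using pow_le_one₀ (norm_nonneg y) hy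
  have hqx : ‖q * x‖ ≤ 1 := by
    rw [norm_mul]; nlinarith [norm_nonneg q, norm_nonneg x]
  have hterm (k : ℕ) : eulerCoeff q (k + 1) * x ^ (k + 1) =
      eulerCoeff q (k + 1) * (q * x) ^ (k + 1) - q * x * (eulerCoeff q k * (q * x) ^ k) := by
    linear_combination x ^ (k + 1) * eulerCoeff_succ_mul hq k
  have htail : ∑' k, eulerCoeff q (k + 1) * (q * x) ^ (k + 1) = eulerSeries q (q * x) - 1 := by
    rw [eulerSeries, (hsum hqx).tsum_eq_zero_add, eulerCoeff_zero]
    ring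
  rw [eulerSeries, (hsum hx).tsum_eq_zero_add, tsum_congr hterm,
    ((summable_nat_add_iff 1).mpr (hsum hqx)).tsum_sub ((hsum hqx).mul_left _), tsum_mul_left,
    htail, eulerCoeff_zero, eulerSeries]
  ring

lemma tendsto_eulerSeries_pow (hq : ‖q‖ < 1) :
    Tendsto (fun m : ℕ => eulerSeries q (q ^ m)) atTop (𝓝 1) := by
  rw [← eulerSeries_zero q]
  exact tendsto_tsum_eulerCoeff_mul hq (M := 1)
    (fun m k => by rw [← pow_mul, norm_pow]; exact pow_le_one₀ (norm_nonneg q) hq.le)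
    fun k => (tendsto_pow_atTop_nhds_zero_of_norm_lt_one hq).pow k

lemma tsum_eulerCoeff (hq : ‖q‖ < 1) : ∑' k, eulerCoeff q k = qPochInf q q := by
  have hiter (m : ℕ) : eulerSeries q 1 = qPoch q q m * eulerSeries q (q ^ m) := by
    induction m with
    | zero => simp [qPoch]
    | succ m ih =>
      have hqm : ‖q ^ m‖ ≤ 1 := by rw [norm_pow]; exact pow_le_one₀ (norm_nonneg q) hq.le
      rw [ih, eulerSeries_eq_one_sub_mul hq hqm, qPoch_succ, ← pow_succ']
      ring
  have hlim := tendsto_nhds_unique (tendsto_const_nhds.congr hiter)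
    ((tendsto_qPoch q hq).mul (tendsto_eulerSeries_pow hq))
  simpa [eulerSeries] using hlim

noncomputable def partialFractionSeries (q c : ℂ) : ℂ :=
  ∑' k, eulerCoeff q k * (1 - c * q ^ k)⁻¹

lemma summable_eulerCoeff_mul_inv (hq : ‖q‖ < 1) (c : ℂ) :
    Summable fun k => eulerCoeff q k * (1 - c * q ^ k)⁻¹ :=
  have ⟨_, hM⟩ := exists_norm_inv_one_sub_mul_pow_le c hq
  summable_eulerCoeff_mul hq hM

lemma one_sub_mul_partialFractionSeries {c : ℂ} (hq : ‖q‖ < 1) (hc : ∀ k : ℕ, c * q ^ k ≠ 1) :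
    (1 - c) * partialFractionSeries q c = partialFractionSeries q (c * q) := by
  have hc' (k : ℕ) : 1 - c * q ^ k ≠ 0 := sub_ne_zero.mpr (hc k).symm
  have hhead : (1 - c) * (eulerCoeff q 0 * (1 - c * q ^ 0)⁻¹) = 1 := by
    simpa [eulerCoeff_zero] using mul_inv_cancel₀ (hc' 0)
  have hterm (k : ℕ) : (1 - c) * (eulerCoeff q (k + 1) * (1 - c * q ^ (k + 1))⁻¹) =
      (eulerCoeff q (k + 1) - eulerCoeff q k) + eulerCoeff q k * (1 - c * q * q ^ k)⁻¹ := by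
    rw [mul_assoc c, ← pow_succ']
    field_simp [hc' (k + 1)]
    linear_combination (-c) * eulerCoeff_succ_mul hq k
  have hE := summable_eulerCoeff hq
  have htel : ∑' k, (eulerCoeff q (k + 1) - eulerCoeff q k) = -1 := by
    rw [((summable_nat_add_iff 1).mpr hE).tsum_sub hE, hE.tsum_eq_zero_add, eulerCoeff_zero]
    ring
  rw [partialFractionSeries, (summable_eulerCoeff_mul_inv hq c).tsum_eq_zero_add, mul_add,
    hhead, ← tsum_mul_left, tsum_congr hterm,
    (((summable_nat_add_iff 1).mpr hE).sub hE).tsum_add (summable_eulerCoeff_mul_inv hq _), htel,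
    partialFractionSeries]
  ring

lemma tendsto_partialFractionSeries_mul_pow (hq : ‖q‖ < 1) (c : ℂ) :
    Tendsto (fun m : ℕ => partialFractionSeries q (c * q ^ m)) atTop
      (𝓝 (partialFractionSeries q 0)) := by
  obtain ⟨M, hM⟩ := exists_norm_inv_one_sub_mul_pow_le c hq
  refine tendsto_tsum_eulerCoeff_mul hq (M := M) (fun m k => ?_) fun k => ?_
  · simpa [mul_assoc, ← pow_add] using hM (m + k)
  · have h : Tendsto (fun m : ℕ => c * q ^ m * q ^ k) atTop (𝓝 0) := by
      simpa using ((tendsto_pow_atTop_nhds_zero_of_norm_lt_one hq).const_mul c).mul_const (q ^ k)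
    simpa using (tendsto_const_nhds (x := (1 : ℂ)) |>.sub h).inv₀ (by simp)

lemma qPochInf_mul_partialFractionSeries {c : ℂ} (hq : ‖q‖ < 1) (hc : ∀ k : ℕ, c * q ^ k ≠ 1) :
    qPochInf c q * partialFractionSeries q c = qPochInf q q := by
  have hiter (m : ℕ) :
      qPoch c q m * partialFractionSeries q c = partialFractionSeries q (c * q ^ m) := by
    induction m with
    | zero => simp [qPoch]
    | succ m ih =>
      have hcm (k : ℕ) : c * q ^ m * q ^ k ≠ 1 := by
        simpa [mul_assoc, ← pow_add] using hc (m + k)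
      rw [qPoch_succ, mul_right_comm, ih, mul_comm, one_sub_mul_partialFractionSeries hq hcm,
        mul_assoc, ← pow_succ]
  have hlim := tendsto_nhds_unique ((tendsto_qPoch c hq).mul_const _)
    ((tendsto_partialFractionSeries_mul_pow hq c).congr fun m => (hiter m).symm)
  simpa [partialFractionSeries, tsum_eulerCoeff hq] using hlim

end Euler

theorem stmt6_general (q c : ℂ) (hq1 : ‖q‖ < 1)
    (hc : ∀ k : ℕ, c * q ^ k ≠ 1) :
    ∑' n : ℕ, ((-1) ^ n * q ^ ((n + 1) * n / 2) / qPoch q q (n + 1)) *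
        ∑ k ∈ Finset.range (n + 1), 1 / (1 - c * q ^ k) =
      qPochInf q q / qPochInf c q := by
  obtain ⟨B, hB⟩ := exists_norm_eulerCoeff_le hq1
  obtain ⟨M, hM⟩ := exists_norm_inv_one_sub_mul_pow_le c hq1
  simp_rw [← eulerCoeff_sub_eulerCoeff_succ hq1, one_div]
  rw [tsum_sub_succ_mul_sum_range (norm_nonneg q) hq1 hB hM,
    eq_div_iff (qPochInf_ne_zero hq1 hc), ← qPochInf_mul_partialFractionSeries hq1 hc, mul_comm,
    partialFractionSeries]

/-- The series on the left runs over `n ≥ 1`; here the summation index is shifted by one,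
so that the term of index `n : ℕ` corresponds to `n + 1`. -/
theorem stmt6 (q c : ℂ) (hq0 : 0 < ‖q‖) (hq1 : ‖q‖ < 1)
    (hc : ∀ k : ℕ, c * q ^ k ≠ 1) :
    ∑' n : ℕ, ((-1) ^ n * q ^ ((n + 1) * n / 2) / qPoch q q (n + 1)) *
        ∑ k ∈ Finset.range (n + 1), 1 / (1 - c * q ^ k) =
      qPochInf q q / qPochInf c q :=
  stmt6_general q c hq1 hc
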